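/- Let K, L be n×n positive semidefinite matrices with L ⪯ K and λ > 0. Then the variance satisfies Tr(L²(L+nλI)⁻²) ≤ Tr(K²(K+nλI)⁻²). -/

import Mathlib

open Matrix

section Aux

variable {m : Type*} [Fintype m] [DecidableEq m]

lemma psd_smul {A : Matrix m m ℝ} (hA : A.PosSemidef) {c : ℝ} (hc : 0 ≤ c) :
    (c • A).PosSemidef := by
  refine ⟨by show _ = _; rw [conjTranspose_smul, hA.1.eq]; simp, fun x => ?_⟩
  exact (hA.smul hc).2 x

lemma psd_trace_nonneg {A : Matrix m m ℝ} (hA : A.PosSemidef) : 0 ≤ A.trace := by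
  rw [Matrix.trace]
  refine Finset.sum_nonneg fun i _ => ?_
  exact hA.diag_nonneg

open scoped MatrixOrder in
lemma psd_trace_mul_nonneg {A B : Matrix m m ℝ} (hA : A.PosSemidef) (hB : B.PosSemidef) :
    0 ≤ (A * B).trace := by
  have hs : CFC.sqrt A * CFC.sqrt A = A := CFC.sqrt_mul_sqrt_self A hA.nonneg
  have h1 : (A * B).trace = (CFC.sqrt A * B * CFC.sqrt A).trace := by
    conv_lhs => rw [← hs, Matrix.mul_assoc, Matrix.trace_mul_comm]
  rw [h1]
  have : (CFC.sqrt A * B * CFC.sqrt A).PosSemidef := by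
    have := hB.mul_mul_conjTranspose_same (CFC.sqrt A)
    rwa [(CFC.sqrt_nonneg A).posSemidef.1.eq] at this
  exact psd_trace_nonneg this

/-- Inverse is antitone in the Loewner order on positive definite matrices. -/
lemma inv_antitone {A B : Matrix m m ℝ} (hA : A.PosDef) (hB : B.PosDef)
    (hAB : (B - A).PosSemidef) : (A⁻¹ - B⁻¹).PosSemidef := by
  have hAu : IsUnit A.det := hA.det_pos.ne'.isUnit
  have hBu : IsUnit B.det := hB.det_pos.ne'.isUnit
  have hiA : A * A⁻¹ = 1 := Matrix.mul_nonsing_inv A hAu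
  have hiA' : A⁻¹ * A = 1 := Matrix.nonsing_inv_mul A hAu
  have hiB : B * B⁻¹ = 1 := Matrix.mul_nonsing_inv B hBu
  have hiB' : B⁻¹ * B = 1 := Matrix.nonsing_inv_mul B hBu
  have inner' : A⁻¹ * ((B - A) * B⁻¹) = A⁻¹ - B⁻¹ := by
    rw [Matrix.sub_mul, hiB, Matrix.mul_sub, Matrix.mul_one, ← Matrix.mul_assoc, hiA',
      Matrix.one_mul]
  have left : B⁻¹ * ((B - A) * A⁻¹) = A⁻¹ - B⁻¹ := by
    rw [Matrix.sub_mul, hiA, Matrix.mul_sub, Matrix.mul_one, ← Matrix.mul_assoc, hiB',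
      Matrix.one_mul]
  have key : A⁻¹ - B⁻¹ = B⁻¹ * ((B - A) * B⁻¹) + B⁻¹ * ((B - A) * (A⁻¹ * ((B - A) * B⁻¹))) := by
    rw [inner']
    simp only [Matrix.mul_sub]
    rw [left]
    abel
  rw [key]
  have hBinv : (B⁻¹).IsHermitian := hB.inv.isHermitian
  have h1 : (B⁻¹ * ((B - A) * B⁻¹)).PosSemidef := by
    have := hAB.mul_mul_conjTranspose_same B⁻¹
    rwa [hBinv.eq, Matrix.mul_assoc] at this
  have h2 : (B⁻¹ * ((B - A) * (A⁻¹ * ((B - A) * B⁻¹)))).PosSemidef := by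
    have := hA.inv.posSemidef.mul_mul_conjTranspose_same (B⁻¹ * (B - A))
    rw [conjTranspose_mul, hBinv.eq, hAB.isHermitian.eq] at this
    simpa only [Matrix.mul_assoc] using this
  exact h1.add h2

end Aux

/-- If `L ⪯ K` then the variance is monotone:
    `Tr (L² (L + nλI)⁻²) ≤ Tr (K² (K + nλI)⁻²)`. -/
theorem variance_monotone
    (n : ℕ) (K L : Matrix (Fin n) (Fin n) ℝ) (lam : ℝ)
    (hK : K.PosSemidef) (hL : L.PosSemidef) (hLK : (K - L).PosSemidef) (hlam : 0 < lam) :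
    Matrix.trace (L ^ 2 * ((L + ((n : ℝ) * lam) • (1 : Matrix (Fin n) (Fin n) ℝ))⁻¹) ^ 2)
      ≤ Matrix.trace (K ^ 2 * ((K + ((n : ℝ) * lam) • (1 : Matrix (Fin n) (Fin n) ℝ))⁻¹) ^ 2) := by
  rcases Nat.eq_zero_or_pos n with hn | hn
  · subst hn
    simp [Matrix.trace]
  set c : ℝ := (n : ℝ) * lam with hc
  have hcpos : 0 < c := mul_pos (by exact_mod_cast hn) hlam
  -- positive definiteness of the shifted matrices
  have hc1 : ((c : ℝ) • (1 : Matrix (Fin n) (Fin n) ℝ)).PosDef := by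
    rw [Matrix.smul_one_eq_diagonal]
    exact Matrix.posDef_diagonal_iff.mpr fun _ => hcpos
  set BL : Matrix (Fin n) (Fin n) ℝ := L + c • 1 with hBL
  set BK : Matrix (Fin n) (Fin n) ℝ := K + c • 1 with hBK
  have hBLpd : BL.PosDef := Matrix.PosDef.posSemidef_add hL hc1
  have hBKpd : BK.PosDef := Matrix.PosDef.posSemidef_add hK hc1
  have hBLu : IsUnit BL.det := hBLpd.det_pos.ne'.isUnit
  have hBKu : IsUnit BK.det := hBKpd.det_pos.ne'.isUnit
  have hiBL : BL * BL⁻¹ = 1 := Matrix.mul_nonsing_inv _ hBLu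
  have hiBL' : BL⁻¹ * BL = 1 := Matrix.nonsing_inv_mul _ hBLu
  have hiBK : BK * BK⁻¹ = 1 := Matrix.mul_nonsing_inv _ hBKu
  set P : Matrix (Fin n) (Fin n) ℝ := 1 - c • BL⁻¹ with hP
  set Q : Matrix (Fin n) (Fin n) ℝ := 1 - c • BK⁻¹ with hQ
  -- `L * BL⁻¹ = P` and similarly for `K`
  have hLP : L * BL⁻¹ = P := by
    have : L = BL - c • 1 := by rw [hBL]; abel
    rw [this, Matrix.sub_mul, hiBL, Matrix.smul_mul, Matrix.one_mul, hP]
  have hKQ : K * BK⁻¹ = Q := by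
    have : K = BK - c • 1 := by rw [hBK]; abel
    rw [this, Matrix.sub_mul, hiBK, Matrix.smul_mul, Matrix.one_mul, hQ]
  -- commutation with the inverse
  have commL : BL⁻¹ * L = L * BL⁻¹ := by
    have hcm : L * BL = BL * L := by
      rw [hBL]
      simp [Matrix.mul_add, Matrix.add_mul, Matrix.mul_smul, Matrix.smul_mul]
    calc BL⁻¹ * L = BL⁻¹ * L * (BL * BL⁻¹) := by rw [hiBL, Matrix.mul_one]
      _ = BL⁻¹ * (L * BL) * BL⁻¹ := by simp only [Matrix.mul_assoc]
      _ = BL⁻¹ * (BL * L) * BL⁻¹ := by rw [hcm]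
      _ = (BL⁻¹ * BL) * (L * BL⁻¹) := by simp only [Matrix.mul_assoc]
      _ = L * BL⁻¹ := by rw [hiBL', Matrix.one_mul]
  have commK : BK⁻¹ * K = K * BK⁻¹ := by
    have hiBK' : BK⁻¹ * BK = 1 := Matrix.nonsing_inv_mul _ hBKu
    have hcm : K * BK = BK * K := by
      rw [hBK]
      simp [Matrix.mul_add, Matrix.add_mul, Matrix.mul_smul, Matrix.smul_mul]
    calc BK⁻¹ * K = BK⁻¹ * K * (BK * BK⁻¹) := by rw [hiBK, Matrix.mul_one]
      _ = BK⁻¹ * (K * BK) * BK⁻¹ := by simp only [Matrix.mul_assoc]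
      _ = BK⁻¹ * (BK * K) * BK⁻¹ := by rw [hcm]
      _ = (BK⁻¹ * BK) * (K * BK⁻¹) := by simp only [Matrix.mul_assoc]
      _ = K * BK⁻¹ := by rw [hiBK', Matrix.one_mul]
  -- rewrite the traces as traces of `P ^ 2` and `Q ^ 2`
  have sqL : L ^ 2 * (BL⁻¹) ^ 2 = P ^ 2 := by
    rw [← hLP]
    simp only [pow_two, Matrix.mul_assoc]
    congr 1
    rw [← Matrix.mul_assoc, ← Matrix.mul_assoc, commL]
  have sqK : K ^ 2 * (BK⁻¹) ^ 2 = Q ^ 2 := by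
    rw [← hKQ]
    simp only [pow_two, Matrix.mul_assoc]
    congr 1
    rw [← Matrix.mul_assoc, ← Matrix.mul_assoc, commK]
  rw [sqL, sqK]
  -- positivity facts
  have hdiff : (BK - BL).PosSemidef := by
    have : BK - BL = K - L := by rw [hBK, hBL]; abel
    rw [this]; exact hLK
  have hQP : (Q - P).PosSemidef := by
    have h1 : (BL⁻¹ - BK⁻¹).PosSemidef := inv_antitone hBLpd hBKpd hdiff
    have h2 : (c • (BL⁻¹ - BK⁻¹)).PosSemidef := psd_smul h1 hcpos.le
    have : Q - P = c • (BL⁻¹ - BK⁻¹) := by rw [hQ, hP, smul_sub]; abel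
    rwa [this]
  have hone_sub : ∀ (B : Matrix (Fin n) (Fin n) ℝ), B.PosSemidef →
      ((1 : Matrix (Fin n) (Fin n) ℝ) - c • (B + c • 1)⁻¹).PosSemidef := by
    intro B hB
    have hBpd : (B + c • 1).PosDef := Matrix.PosDef.posSemidef_add hB hc1
    have hsub : ((B + c • 1) - c • 1).PosSemidef := by simpa using hB
    have hanti : ((c • (1 : Matrix (Fin n) (Fin n) ℝ))⁻¹ - (B + c • 1)⁻¹).PosSemidef :=
      inv_antitone hc1 hBpd hsub
    have hinv1 : (c • (1 : Matrix (Fin n) (Fin n) ℝ))⁻¹ = c⁻¹ • 1 := by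
      apply Matrix.inv_eq_right_inv
      rw [Matrix.smul_mul, Matrix.mul_smul, Matrix.one_mul, smul_smul,
        mul_inv_cancel₀ hcpos.ne']
      exact one_smul _ _
    have := psd_smul hanti hcpos.le
    rw [hinv1, smul_sub, smul_smul, mul_inv_cancel₀ hcpos.ne', one_smul] at this
    exact this
  have hQaddP : (Q + P).PosSemidef := (hone_sub K hK).add (hone_sub L hL)
  -- conclude via the trace of a product of PSD matrices
  have key : ((Q - P) * (Q + P)).trace = (Q ^ 2).trace - (P ^ 2).trace := by
    rw [Matrix.sub_mul, Matrix.mul_add, Matrix.mul_add]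
    simp only [Matrix.trace_sub, Matrix.trace_add, pow_two]
    rw [Matrix.trace_mul_comm Q P]
    ring
  have hnn : 0 ≤ ((Q - P) * (Q + P)).trace := psd_trace_mul_nonneg hQP hQaddP
  linarith [key ▸ hnn]
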